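/- Let p ≡ 3 (mod 4) be a prime and α ≥ 1 an integer. Then 𝒢_{Z_{p^α}} is Ramanujan if and only if α = 1 or α = 2. -/

import Mathlib

/-!
When `p ≡ 3 (mod 4)` the unit group of `ℤ/p^α` has order `2m` with `m` odd, so every unit is
`u = (u^((m+1)/2))² · u^m` with `u^m = ±1`: the connection set is exactly the set of units, and
`x ~ y` iff `x ≢ y (mod p)`. The graph is therefore complete `p`-partite with parts of size
`c = p^(α-1)`. For such a graph an eigenvector equation forces the eigenvalue into
`{0, -c, p^α - c}`, and the difference of the indicators of two parts has eigenvalue `-c`. Hence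
the graph is Ramanujan iff `c ≤ 2√(p^α - c - 1)`, which holds exactly when `α ≤ 2`.
-/

/-- The set of squares of units of a commutative ring. -/
def QR (R : Type*) [CommRing R] : Set R := {x | ∃ u : Rˣ, (u : R) ^ 2 = x}

/-- The connection set of the quadratic unitary Cayley graph. -/
def TR (R : Type*) [CommRing R] : Set R := QR R ∪ -(QR R)

open scoped Classical in
/-- Adjacency matrix of the quadratic unitary Cayley graph `𝒢_R`. -/
noncomputable def adjMat (R : Type*) [CommRing R] [Fintype R] : Matrix R R ℝ :=
  fun x y => if x - y ∈ TR R then 1 else 0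

open Finset Matrix

theorem eq_sq_mul_pow_of_pow_two_mul_eq_one {M : Type*} [Monoid M] {g : M} {m : ℕ} (hm : Odd m)
    (hg : g ^ (2 * m) = 1) : g = (g ^ ((m + 1) / 2)) ^ 2 * g ^ m := by
  obtain ⟨k, rfl⟩ := hm
  rw [show (2 * k + 1 + 1) / 2 = k + 1 by omega, ← pow_mul, ← pow_add,
    show (k + 1) * 2 + (2 * k + 1) = 2 * (2 * k + 1) + 1 by ring, pow_succ, hg, one_mul]

theorem mem_TR_iff_isUnit {R : Type*} [CommRing R] [Fintype Rˣ] {m : ℕ} (hm : Odd m)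
    (hcard : Fintype.card Rˣ = 2 * m) (hsqrt : ∀ y : R, y ^ 2 = 1 → y = 1 ∨ y = -1) (x : R) :
    x ∈ TR R ↔ IsUnit x := by
  constructor
  · rintro (⟨u, rfl⟩ | ⟨u, hu⟩)
    · exact u.isUnit.pow 2
    · rw [← neg_neg x, ← hu]
      exact (u.isUnit.pow 2).neg
  · rintro ⟨u, rfl⟩
    have hu : (u : R) = (u ^ ((m + 1) / 2) : Rˣ) ^ 2 * (u ^ m : Rˣ) := by
      simpa using congrArg Units.val
        (eq_sq_mul_pow_of_pow_two_mul_eq_one hm (hcard ▸ pow_card_eq_one (G := Rˣ) (x := u)))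
    have hsq : ((u ^ m : Rˣ) : R) ^ 2 = 1 := by
      rw [← Units.val_pow_eq_pow_val, ← pow_mul, mul_comm, ← hcard, pow_card_eq_one,
        Units.val_one]
    rcases hsqrt _ hsq with h | h
    · exact Or.inl ⟨u ^ ((m + 1) / 2), by rw [hu, h, mul_one]⟩
    · exact Or.inr ⟨u ^ ((m + 1) / 2), by rw [hu, h, mul_neg_one, neg_neg]⟩

theorem AddMonoidHom.card_fiber_mul_card_of_surjective {G M F : Type*} [AddGroup G] [Fintype G]
    [AddMonoid M] [Fintype M] [DecidableEq M] [FunLike F G M] [AddMonoidHomClass F G M] (f : F)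
    (hf : Function.Surjective f) (y : M) : #{g | f g = y} * Fintype.card M = Fintype.card G := by
  rw [← card_univ (α := G),
    card_eq_sum_card_fiberwise (f := f) (s := univ) (t := univ) (by simp),
    sum_congr rfl fun z _ => card_fiber_eq_of_mem_range f (hf z) (hf y), sum_const, card_univ,
    smul_eq_mul, mul_comm]

theorem Matrix.mem_spectrum_iff_exists_mulVec_eq_smul {K n : Type*} [Field K] [Fintype n]
    [DecidableEq n] (A : Matrix n n K) (μ : K) :
    μ ∈ spectrum K A ↔ ∃ v ≠ 0, A *ᵥ v = μ • v := by
  rw [← Matrix.spectrum_toLin', ← Module.End.hasEigenvalue_iff_mem_spectrum,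
    Module.End.hasEigenvalue_iff, Submodule.ne_bot_iff]
  simp only [Module.End.mem_eigenspace_iff, Matrix.toLin'_apply]
  tauto

section Multipartite

variable {K V W : Type*} [Field K] [Fintype V] [DecidableEq W]

variable (K) in
def multipartiteMatrix (f : V → W) : Matrix V V K :=
  Matrix.of fun x y => if f x = f y then 0 else 1

theorem multipartiteMatrix_mulVec_apply (f : V → W) (v : V → K) (x : V) :
    (multipartiteMatrix K f *ᵥ v) x = ∑ y, v y - ∑ y with f y = f x, v y := by
  rw [sum_filter, ← sum_sub_distrib]
  refine sum_congr rfl fun y _ => ?_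
  simp only [multipartiteMatrix, Matrix.of_apply, eq_comm (a := f x)]
  split_ifs <;> ring

variable {f : V → W} {c : ℕ} (hf : ∀ x, #{y | f y = f x} = c)
include hf

theorem sum_fiber_comp (g : W → K) (x : V) : ∑ y with f y = f x, g (f y) = c * g (f x) := by
  rw [sum_congr rfl fun y hy => by rw [(mem_filter.mp hy).2], sum_const, hf, nsmul_eq_mul]

theorem sum_sum_fiber (v : V → K) : ∑ x, ∑ y with f y = f x, v y = c * ∑ y, v y := by
  simp_rw [sum_filter]
  rw [sum_comm, mul_sum]
  refine sum_congr rfl fun y _ => ?_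
  rw [← sum_filter, sum_const, nsmul_eq_mul]
  simp_rw [eq_comm (a := f y)]
  rw [hf]

theorem spectrum_multipartiteMatrix_subset [DecidableEq V] :
    spectrum K (multipartiteMatrix K f) ⊆ {0, -(c : K), (Fintype.card V : K) - c} := by
  intro μ hμ
  obtain ⟨v, hv0, hv⟩ := (Matrix.mem_spectrum_iff_exists_mulVec_eq_smul _ μ).mp hμ
  set S := ∑ y, v y
  set T : W → K := fun w => ∑ y with f y = w, v y
  have hvx : ∀ x, μ * v x = S - T (f x) := fun x => by
    rw [← smul_eq_mul, ← Pi.smul_apply, ← hv, multipartiteMatrix_mulVec_apply]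
  -- Sum `hvx` over the fibre of `x`, on which `T ∘ f` is constant, and over all of `V`.
  have hT : ∀ x, μ * T (f x) = c * (S - T (f x)) := fun x => by
    rw [← sum_fiber_comp hf (fun w => S - T w), mul_sum]
    exact sum_congr rfl fun y _ => hvx y
  have hS : μ * S = (Fintype.card V - c) * S := by
    rw [mul_sum, sum_congr rfl fun y _ => hvx y, sum_sub_distrib,
      sum_sum_fiber hf, sum_const, card_univ, nsmul_eq_mul]
    ring
  by_cases hr : μ = Fintype.card V - c
  · exact Or.inr (Or.inr hr)
  have hS0 : S = 0 :=
    (mul_eq_zero.mp (by linear_combination hS : (μ - (Fintype.card V - c)) * S = 0)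
      ).resolve_left (sub_ne_zero.mpr hr)
  by_cases hc : μ = -c
  · exact Or.inr (Or.inl hc)
  have hT0 : ∀ x, T (f x) = 0 := fun x =>
    (mul_eq_zero.mp (by linear_combination hT x + c * hS0 : (μ + c) * T (f x) = 0)
      ).resolve_left fun h => hc (eq_neg_of_add_eq_zero_left h)
  obtain ⟨x, hx⟩ := Function.ne_iff.mp hv0
  refine Or.inl ((mul_eq_zero.mp ?_).resolve_right hx)
  rw [hvx, hS0, hT0, sub_zero]

theorem neg_mem_spectrum_multipartiteMatrix [DecidableEq V] {x₀ x₁ : V} (h : f x₀ ≠ f x₁) :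
    -(c : K) ∈ spectrum K (multipartiteMatrix K f) := by
  set g : W → K := fun w => (if w = f x₀ then 1 else 0) - (if w = f x₁ then 1 else 0)
  have hsum : ∑ y, g (f y) = 0 := by
    simp only [g, sum_sub_distrib, sum_boole, hf, sub_self]
  refine (Matrix.mem_spectrum_iff_exists_mulVec_eq_smul _ _).mpr ⟨g ∘ f, ?_, funext fun x => ?_⟩
  · exact Function.ne_iff.mpr ⟨x₀, by simp [g, h]⟩
  · rw [multipartiteMatrix_mulVec_apply, Function.comp_def, hsum, sum_fiber_comp hf]
    simp only [Pi.smul_apply, smul_eq_mul]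
    ring

end Multipartite

namespace ZMod

variable {p α : ℕ} (hp : p.Prime) (hα : α ≠ 0)
include hp hα

theorem isUnit_iff_castHom_ne_zero (x : ZMod (p ^ α)) :
    IsUnit x ↔ castHom (dvd_pow_self p hα) (ZMod p) x ≠ 0 := by
  have : NeZero (p ^ α) := ⟨pow_ne_zero _ hp.ne_zero⟩
  rw [← natCast_zmod_val x, map_natCast,
    isUnit_natCast_iff_not_dvd_pow hp (Nat.pos_of_ne_zero hα), Ne, natCast_eq_zero_iff]

theorem eq_one_or_eq_neg_one_of_sq_eq_one (hp2 : p ≠ 2) {y : ZMod (p ^ α)} (hy : y ^ 2 = 1) :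
    y = 1 ∨ y = -1 := by
  have : Fact p.Prime := ⟨hp⟩
  have h2 : castHom (dvd_pow_self p hα) (ZMod p) 2 ≠ 0 := by
    rw [map_ofNat]
    exact Ring.two_ne_zero (by rwa [ringChar_zmod_n])
  have hunit : IsUnit (y - 1) ∨ IsUnit (y + 1) := by
    by_contra! h
    simp only [isUnit_iff_castHom_ne_zero hp hα, not_not] at h
    apply h2
    rw [show (2 : ZMod (p ^ α)) = (y + 1) - (y - 1) by ring, map_sub, h.1, h.2, sub_zero]
  have hprod : (y - 1) * (y + 1) = 0 := by linear_combination hy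
  rcases hunit with hu | hu
  · exact Or.inr (by linear_combination (hu.mul_right_eq_zero.mp hprod))
  · exact Or.inl (by linear_combination (hu.mul_left_eq_zero.mp hprod))

theorem mem_TR_iff_isUnit_of_mod_four_eq_three [NeZero (p ^ α)] (hp4 : p % 4 = 3)
    (x : ZMod (p ^ α)) : x ∈ TR (ZMod (p ^ α)) ↔ IsUnit x := by
  have hodd : Odd (p ^ (α - 1) * ((p - 1) / 2)) :=
    (Nat.odd_iff.mpr (by omega : p % 2 = 1)).pow.mul (Nat.odd_iff.mpr (by omega))
  refine _root_.mem_TR_iff_isUnit hodd ?_ (fun y => eq_one_or_eq_neg_one_of_sq_eq_one hp hα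
    (by omega)) x
  rw [card_units_eq_totient, Nat.totient_prime_pow hp (Nat.pos_of_ne_zero hα)]
  have : 2 * ((p - 1) / 2) = p - 1 := by omega
  rw [mul_left_comm, this]

theorem card_fiber_castHom [NeZero (p ^ α)] (x : ZMod (p ^ α)) :
    #{y | castHom (dvd_pow_self p hα) (ZMod p) y = castHom (dvd_pow_self p hα) (ZMod p) x} =
      p ^ (α - 1) := by
  have : NeZero p := ⟨hp.ne_zero⟩
  have h := AddMonoidHom.card_fiber_mul_card_of_surjective (castHom (dvd_pow_self p hα) (ZMod p))
    (ringHom_surjective _) (castHom (dvd_pow_self p hα) (ZMod p) x)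
  rw [card, card] at h
  exact Nat.eq_of_mul_eq_mul_right hp.pos (h.trans (pow_sub_one_mul hα p).symm)

theorem adjMat_eq_multipartiteMatrix [NeZero (p ^ α)] (hp4 : p % 4 = 3) :
    adjMat (ZMod (p ^ α)) = multipartiteMatrix ℝ (castHom (dvd_pow_self p hα) (ZMod p)) := by
  ext x y
  simp only [adjMat, multipartiteMatrix, of_apply,
    mem_TR_iff_isUnit_of_mod_four_eq_three hp hα hp4, isUnit_iff_castHom_ne_zero hp hα, map_sub,
    ne_eq, sub_eq_zero, ite_not]

theorem spectrum_adjMat_subset [NeZero (p ^ α)] (hp4 : p % 4 = 3) :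
    spectrum ℝ (adjMat (ZMod (p ^ α))) ⊆
      {0, -(p : ℝ) ^ (α - 1), (p : ℝ) ^ α - (p : ℝ) ^ (α - 1)} := by
  rw [adjMat_eq_multipartiteMatrix hp hα hp4]
  simpa [ZMod.card] using
    spectrum_multipartiteMatrix_subset (K := ℝ) (card_fiber_castHom hp hα)

theorem neg_mem_spectrum_adjMat [NeZero (p ^ α)] (hp4 : p % 4 = 3) :
    -(p : ℝ) ^ (α - 1) ∈ spectrum ℝ (adjMat (ZMod (p ^ α))) := by
  have : Fact p.Prime := ⟨hp⟩
  rw [adjMat_eq_multipartiteMatrix hp hα hp4]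
  simpa using neg_mem_spectrum_multipartiteMatrix (K := ℝ) (card_fiber_castHom hp hα)
    (x₀ := 0) (x₁ := 1) (by rw [map_zero, map_one]; exact zero_ne_one)

end ZMod

theorem Matrix.IsHermitian.forall_abs_eigenvalues_le_iff {n : Type*} [Fintype n] [DecidableEq n]
    {A : Matrix n n ℝ} (hA : A.IsHermitian) {b c r : ℝ} (hb : 0 ≤ b) (hc : 0 < c) (hcr : c < r)
    (hspec : spectrum ℝ A ⊆ {0, -c, r}) (hneg : -c ∈ spectrum ℝ A) :
    (∀ i, |hA.eigenvalues i| ≠ r → |hA.eigenvalues i| ≤ b) ↔ c ≤ b := by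
  rw [hA.spectrum_real_eq_range_eigenvalues] at hspec hneg
  obtain ⟨j, hj⟩ := hneg
  constructor
  · intro h
    simpa [hj, abs_of_pos hc] using h j (by simpa [hj, abs_of_pos hc] using hcr.ne)
  · intro hcb i hi
    rcases hspec ⟨i, rfl⟩ with h | h | h
    · simpa [h] using hb
    · simpa [h, abs_of_pos hc] using hcb
    · exact absurd (by rw [h, abs_of_pos (hc.trans hcr)]) hi

theorem pow_pred_le_two_mul_sqrt_iff {q : ℝ} (hq : 3 ≤ q) {α : ℕ} (hα : 1 ≤ α) :
    q ^ (α - 1) ≤ 2 * √(q ^ α - q ^ (α - 1) - 1) ↔ α = 1 ∨ α = 2 := by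
  obtain ⟨k, rfl⟩ := Nat.exists_eq_add_of_le' hα
  rw [Nat.add_sub_cancel, pow_succ]
  have hc : 1 ≤ q ^ k := one_le_pow₀ (by linarith)
  have hb : 0 ≤ q ^ k * q - q ^ k - 1 := by nlinarith
  rw [← pow_le_pow_iff_left₀ (by positivity) (by positivity) two_ne_zero, mul_pow,
    Real.sq_sqrt hb]
  match k with
  | 0 => norm_num; linarith
  | 1 => norm_num; nlinarith
  | k + 2 =>
    have hq2 : q ^ 2 ≤ q ^ (k + 2) := pow_le_pow_right₀ (by linarith) (by omega)
    simp only [show ¬(k + 2 + 1 = 1 ∨ k + 2 + 1 = 2) by omega, iff_false, not_le]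
    nlinarith [sq_nonneg (q - 2)]

open scoped Classical in
/-- For a prime `p ≡ 3 (mod 4)` and `α ≥ 1`, the graph `𝒢_{ℤ_{p^α}}`, which is
`(p^α − p^{α−1})`-regular, is Ramanujan if and only if `α = 1` or `α = 2`. -/
theorem stmt18 (p α : ℕ) [NeZero (p ^ α)] (hp : p.Prime) (hp4 : p % 4 = 3) (hα : 1 ≤ α)
    (hA : (adjMat (ZMod (p ^ α))).IsHermitian) :
    (∀ i, |hA.eigenvalues i| ≠ (p : ℝ) ^ α - (p : ℝ) ^ (α - 1) →
        |hA.eigenvalues i| ≤ 2 * Real.sqrt ((p : ℝ) ^ α - (p : ℝ) ^ (α - 1) - 1)) ↔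
      (α = 1 ∨ α = 2) := by
  have hα0 : α ≠ 0 := by omega
  have hp3 : (3 : ℝ) ≤ p := by exact_mod_cast (show 3 ≤ p by have := hp.two_le; omega)
  have hc : (0 : ℝ) < (p : ℝ) ^ (α - 1) := by positivity
  have hcr : (p : ℝ) ^ (α - 1) < (p : ℝ) ^ α - (p : ℝ) ^ (α - 1) := by
    rw [← pow_sub_one_mul hα0]
    nlinarith
  rw [← pow_pred_le_two_mul_sqrt_iff hp3 hα]
  exact hA.forall_abs_eigenvalues_le_iff (by positivity) hc hcr
    (ZMod.spectrum_adjMat_subset hp hα0 hp4) (ZMod.neg_mem_spectrum_adjMat hp hα0 hp4)
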